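/- For each integer N ≥ 1 and m > 0, the equation y^N/(N-1)! + Σ_{j=0}^{N-1} y^j/j! = e^y has exactly one solution y > 0 when N ≥ 2. -/

import Mathlib

/-!
Write `exp y = ∑_{j<N} y^j/j! + y^N T_N(y)` with `T_N(y) = ∑_k y^k/(k+N)!`. For `y > 0` the
equation then says `T_N(y) = 1/(N-1)!`. The power series `T_N` is continuous and strictly
increasing on `[0, ∞)`, starts at `T_N(0) = 1/N! < 1/(N-1)!` and is unbounded since
`T_N(y) ≥ y/(N+1)!`, so it takes the value `1/(N-1)!` exactly once.
-/

open Finset Set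

/-- `(exp y - ∑_{j<N} y^j/j!) / y^N`, extended continuously to `y = 0`. -/
noncomputable def expTail (N : ℕ) (y : ℝ) : ℝ :=
  ∑' k : ℕ, y ^ k / ((k + N).factorial : ℝ)

lemma norm_pow_div_factorial_add_le (N k : ℕ) (y : ℝ) :
    ‖y ^ k / ((k + N).factorial : ℝ)‖ ≤ |y| ^ k / (k.factorial : ℝ) := by
  rw [norm_div, norm_pow, Real.norm_eq_abs, RCLike.norm_natCast]
  gcongr
  exact Nat.le_add_right k N

lemma summable_pow_div_factorial_add (N : ℕ) (y : ℝ) :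
    Summable fun k : ℕ => y ^ k / ((k + N).factorial : ℝ) :=
  (Real.summable_pow_div_factorial |y|).of_norm_bounded (norm_pow_div_factorial_add_le N · y)

lemma exp_eq_sum_add_pow_mul_expTail (N : ℕ) (y : ℝ) :
    Real.exp y = ∑ j ∈ range N, y ^ j / (j.factorial : ℝ) + y ^ N * expTail N y := by
  rw [Real.exp_eq_exp_ℝ, NormedSpace.exp_eq_tsum_div]
  beta_reduce
  rw [← (Real.summable_pow_div_factorial y).sum_add_tsum_nat_add N, expTail, ← tsum_mul_left]
  congr 1
  exact tsum_congr fun k => by rw [pow_add]; ring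

lemma expTail_zero (N : ℕ) : expTail N 0 = (N.factorial : ℝ)⁻¹ := by
  rw [expTail, tsum_eq_single 0 fun k hk => by simp [hk]]
  simp

lemma div_factorial_le_expTail (N : ℕ) {y : ℝ} (hy : 0 ≤ y) :
    y / ((N + 1).factorial : ℝ) ≤ expTail N y := by
  simpa [expTail, add_comm 1 N] using
    (summable_pow_div_factorial_add N y).le_tsum 1 fun k _ => by positivity

lemma strictMonoOn_expTail (N : ℕ) : StrictMonoOn (expTail N) (Ici 0) := by
  intro a (ha : 0 ≤ a) b _ hab
  exact Summable.tsum_lt_tsum_of_nonneg (i := 1) (fun k => by positivity) (fun k => by gcongr)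
    (by simp only [pow_one]; gcongr) (summable_pow_div_factorial_add N b)

lemma continuous_expTail (N : ℕ) : Continuous (expTail N) := by
  refine continuous_iff_continuousAt.2 fun x => ?_
  set R := |x| + 1
  have hR : ContinuousOn (expTail N) (Ioo (-R) R) := by
    refine continuousOn_tsum (fun k => by fun_prop) (Real.summable_pow_div_factorial R)
      fun k y hy => (norm_pow_div_factorial_add_le N k y).trans ?_
    gcongr
    exact (abs_lt.2 hy).le
  exact hR.continuousAt <| Ioo_mem_nhds (by linarith [neg_abs_le x]) (by linarith [le_abs_self x])

lemma pow_mul_add_sum_eq_exp_iff (N : ℕ) {y : ℝ} (hy : y ≠ 0) (a : ℝ) :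
    y ^ N * a + ∑ j ∈ range N, y ^ j / (j.factorial : ℝ) = Real.exp y ↔ expTail N y = a := by
  rw [exp_eq_sum_add_pow_mul_expTail N y, add_comm (y ^ N * a), add_right_inj,
    mul_right_inj' (pow_ne_zero N hy), eq_comm]

theorem existsUnique_pos_expTail_eq (N : ℕ) {c : ℝ} (hc : (N.factorial : ℝ)⁻¹ < c) :
    ∃! y : ℝ, 0 < y ∧ expTail N y = c := by
  set R := c * (N + 1).factorial
  have hR : 0 ≤ R := by
    have : 0 < c := (inv_pos.2 (by positivity)).trans hc
    positivity
  have hcR : c ≤ expTail N R :=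
    calc c = R / (N + 1).factorial := (mul_div_cancel_right₀ _ (by positivity)).symm
      _ ≤ expTail N R := div_factorial_le_expTail N hR
  obtain ⟨y, hy, hyc⟩ := intermediate_value_Icc hR (continuous_expTail N).continuousOn
    ⟨(expTail_zero N).trans_le hc.le, hcR⟩
  have y_pos : 0 < y := hy.1.lt_of_ne <| by
    rintro rfl
    exact hc.ne (by rw [← expTail_zero, hyc])
  exact ⟨y, ⟨y_pos, hyc⟩, fun z ⟨hz, hzc⟩ =>
    (strictMonoOn_expTail N).injOn hz.le y_pos.le (hzc.trans hyc.symm)⟩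

/-- For `N ≥ 2`, `y^N/(N-1)! + ∑_{j<N} y^j/j! = e^y` has exactly one positive root. -/
theorem stmt_9 (N : ℕ) (hN : 2 ≤ N) :
    ∃! y : ℝ, 0 < y ∧
      y ^ N / (Nat.factorial (N - 1) : ℝ) +
          ∑ j ∈ Finset.range N, y ^ j / (Nat.factorial j : ℝ)
        = Real.exp y := by
  have hc : (N.factorial : ℝ)⁻¹ < ((N - 1).factorial : ℝ)⁻¹ :=
    inv_strictAnti₀ (by positivity) (by exact_mod_cast (Nat.factorial_lt (by omega)).2 (by omega))
  refine (existsUnique_congr fun y => and_congr_right fun hy => ?_).2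
    (existsUnique_pos_expTail_eq N hc)
  rw [div_eq_mul_inv]
  exact pow_mul_add_sum_eq_exp_iff N hy.ne' _
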